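/- arXiv:1502.01945 — 2 statements merged into one kernel-verified Lean document; each statement's English description precedes it below -/
import Mathlib

section
/- Uniqueness of the retarded time: let ξ : I → ℝ⁴ be a C¹ proper-time-parametrized future-pointing timelike curve and x an event in the chronological future of the worldline. Then there is at most one τ_R ∈ I satisfying η(x − ξ(τ_R), x − ξ(τ_R)) = 0 and x⁰ > ξ⁰(τ_R). -/
set_option maxHeartbeats 1000000


/-- The Minkowski bilinear form on ℝ⁴ with signature (−,+,+,+). -/
def mink (u v : Fin 4 → ℝ) : ℝ := -(u 0 * v 0) + u 1 * v 1 + u 2 * v 2 + u 3 * v 3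

/-- Cauchy–Schwarz consequence: a unit spatial covector evaluated on a future timelike
unit vector is less than its time component. -/
lemma cs_pos (e1 e2 e3 v0 v1 v2 v3 : ℝ)
    (hee : e1 ^ 2 + e2 ^ 2 + e3 ^ 2 = 1)
    (hu : -(v0 * v0) + v1 * v1 + v2 * v2 + v3 * v3 = -1)
    (hv0 : 0 < v0) :
    0 < v0 - e1 * v1 - e2 * v2 - e3 * v3 := by
  nlinarith [sq_nonneg (e1 * v2 - e2 * v1), sq_nonneg (e1 * v3 - e3 * v1),
    sq_nonneg (e2 * v3 - e3 * v2), sq_nonneg (e1 * v1 + e2 * v2 + e3 * v3 - v0),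
    sq_nonneg (e1 * v1 + e2 * v2 + e3 * v3 + v0)]

/-- Cauchy–Schwarz consequence for a future null vector. -/
lemma cs_le (e1 e2 e3 u0 u1 u2 u3 : ℝ)
    (hee : e1 ^ 2 + e2 ^ 2 + e3 ^ 2 = 1)
    (hn : -(u0 * u0) + u1 * u1 + u2 * u2 + u3 * u3 = 0)
    (hu0 : 0 < u0) :
    e1 * u1 + e2 * u2 + e3 * u3 ≤ u0 := by
  nlinarith [sq_nonneg (e1 * u2 - e2 * u1), sq_nonneg (e1 * u3 - e3 * u1),
    sq_nonneg (e2 * u3 - e3 * u2), sq_nonneg (e1 * u1 + e2 * u2 + e3 * u3 - u0),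
    sq_nonneg (e1 * u1 + e2 * u2 + e3 * u3 + u0)]

lemma retarded_key (ξ ξd : ℝ → Fin 4 → ℝ)
    (hderiv : ∀ τ, ∀ i, HasDerivAt (fun t => ξ t i) (ξd τ i) τ)
    (hunit : ∀ τ, mink (ξd τ) (ξd τ) = -1)
    (hfutvel : ∀ τ, 0 < ξd τ 0)
    (x : Fin 4 → ℝ) (τ₁ τ₂ : ℝ) (hlt : τ₁ < τ₂)
    (h1 : mink (fun i => x i - ξ τ₁ i) (fun i => x i - ξ τ₁ i) = 0 ∧ ξ τ₁ 0 < x 0)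
    (h2 : mink (fun i => x i - ξ τ₂ i) (fun i => x i - ξ τ₂ i) = 0 ∧ ξ τ₂ 0 < x 0) :
    False := by
  obtain ⟨hn1, ht1⟩ := h1
  obtain ⟨hn2, ht2⟩ := h2
  simp only [mink] at hn1 hn2
  set r : ℝ := x 0 - ξ τ₁ 0 with hr
  have hr0 : 0 < r := by rw [hr]; linarith
  set e1 : ℝ := (x 1 - ξ τ₁ 1) / r with he1
  set e2 : ℝ := (x 2 - ξ τ₁ 2) / r with he2
  set e3 : ℝ := (x 3 - ξ τ₁ 3) / r with he3
  have hee : e1 ^ 2 + e2 ^ 2 + e3 ^ 2 = 1 := by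
    rw [he1, he2, he3]
    field_simp
    nlinarith [hn1]
  set g : ℝ → ℝ := fun t => ξ t 0 - e1 * ξ t 1 - e2 * ξ t 2 - e3 * ξ t 3 with hg
  have hmono : StrictMono g := by
    apply strictMono_of_deriv_pos
    intro t
    have hd : HasDerivAt g (ξd t 0 - e1 * ξd t 1 - e2 * ξd t 2 - e3 * ξd t 3) t :=
      (((hderiv t 0).sub ((hderiv t 1).const_mul e1)).sub
        ((hderiv t 2).const_mul e2)).sub ((hderiv t 3).const_mul e3)
    rw [hd.deriv]
    have hu := hunit t
    simp only [mink] at hu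
    exact cs_pos e1 e2 e3 (ξd t 0) (ξd t 1) (ξd t 2) (ξd t 3) hee hu (hfutvel t)
  have hgm : g τ₁ < g τ₂ := hmono hlt
  have key1 : e1 * (x 1 - ξ τ₁ 1) + e2 * (x 2 - ξ τ₁ 2) + e3 * (x 3 - ξ τ₁ 3) = r := by
    rw [he1, he2, he3]
    field_simp
    nlinarith [hn1]
  have hA : g τ₁ = x 0 - e1 * x 1 - e2 * x 2 - e3 * x 3 := by
    have hrr : r = x 0 - ξ τ₁ 0 := hr
    simp only [hg]
    linear_combination key1 - hrr
  have key2 : e1 * (x 1 - ξ τ₂ 1) + e2 * (x 2 - ξ τ₂ 2) + e3 * (x 3 - ξ τ₂ 3)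
      ≤ x 0 - ξ τ₂ 0 :=
    cs_le e1 e2 e3 (x 0 - ξ τ₂ 0) (x 1 - ξ τ₂ 1) (x 2 - ξ τ₂ 2) (x 3 - ξ τ₂ 3)
      hee hn2 (by linarith)
  have hB : g τ₂ ≤ x 0 - e1 * x 1 - e2 * x 2 - e3 * x 3 := by
    simp only [hg]
    nlinarith [key2]
  linarith

/-- Uniqueness of the retarded time: for a proper-time-parametrized future-pointing
timelike worldline ξ and an event x in the chronological future of the worldline,
there is at most one τ_R with x − ξ(τ_R) lightlike and x⁰ > ξ⁰(τ_R). -/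
theorem retarded_time_unique (ξ ξd : ℝ → Fin 4 → ℝ)
    (hderiv : ∀ τ, ∀ i, HasDerivAt (fun t => ξ t i) (ξd τ i) τ)
    (hunit : ∀ τ, mink (ξd τ) (ξd τ) = -1)
    (hfutvel : ∀ τ, 0 < ξd τ 0)
    (x : Fin 4 → ℝ)
    (hx : ∃ τ, mink (fun i => x i - ξ τ i) (fun i => x i - ξ τ i) < 0 ∧ ξ τ 0 < x 0)
    (τ₁ τ₂ : ℝ)
    (h1 : mink (fun i => x i - ξ τ₁ i) (fun i => x i - ξ τ₁ i) = 0 ∧ ξ τ₁ 0 < x 0)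
    (h2 : mink (fun i => x i - ξ τ₂ i) (fun i => x i - ξ τ₂ i) = 0 ∧ ξ τ₂ 0 < x 0) :
    τ₁ = τ₂ := by
  rcases lt_trichotomy τ₁ τ₂ with h | h | h
  · exact (retarded_key ξ ξd hderiv hunit hfutvel x τ₁ τ₂ h h1 h2).elim
  · exact h
  · exact (retarded_key ξ ξd hderiv hunit hfutvel x τ₂ τ₁ h h2 h1).elim
end

section
/- Independence of the reference event: let ξ be a future-pointing timelike worldline and x an event with the property that there exist λ ∈ (0,1) and τ₀ such that |x⃗ − ξ⃗(τ)| / (x⁰ − ξ⁰(τ)) < λ for all τ_min < τ < τ₀. Then for every event y ∈ ℝ⁴ and every μ with λ < μ < 1 there exists τ̂₀ such that |y⃗ − ξ⃗(τ)| / (y⁰ − ξ⁰(τ)) < μ for all τ_min < τ < τ̂₀; in particular y lies in the chronological future of the worldline. -/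
/-!
By the triangle inequality, |y⃗ − ξ⃗(τ)| ≤ |y⃗ − x⃗| + |x⃗ − ξ⃗(τ)| < |y⃗ − x⃗| + λ (x⁰ − ξ⁰(τ)), and
this is at most μ (y⁰ − ξ⁰(τ)) as soon as ξ⁰(τ) < (μ y⁰ − λ x⁰ − |y⃗ − x⃗|)/(μ − λ). Since
ξ⁰(τ) → −∞ as τ → τ_min, this holds near τ_min. A ratio below μ < 1 makes y − ξ(τ) a
future-pointing timelike vector.
-/

open Filter Topology

noncomputable def spatialDist (a b : Fin 4 → ℝ) : ℝ :=
  Real.sqrt ((a 1 - b 1) ^ 2 + (a 2 - b 2) ^ 2 + (a 3 - b 3) ^ 2)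

lemma spatialDist_eq_dist (a b : Fin 4 → ℝ) :
    spatialDist a b = dist !₂[a 1, a 2, a 3] !₂[b 1, b 2, b 3] := by
  simp [spatialDist, EuclideanSpace.dist_eq, Fin.sum_univ_three, Real.dist_eq, sq_abs]

lemma spatialDist_nonneg (a b : Fin 4 → ℝ) : 0 ≤ spatialDist a b :=
  Real.sqrt_nonneg _

lemma spatialDist_triangle (a b c : Fin 4 → ℝ) :
    spatialDist a c ≤ spatialDist a b + spatialDist b c := by
  simp only [spatialDist_eq_dist]
  exact dist_triangle _ _ _

def InPastCone (μ : ℝ) (y p : Fin 4 → ℝ) : Prop :=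
  0 < y 0 - p 0 ∧ spatialDist y p / (y 0 - p 0) < μ

namespace InPastCone

variable {lam μ : ℝ} {x y p : Fin 4 → ℝ}

theorem of_time_lt (hx : InPastCone lam x p) (hμ : lam < μ)
    (hp : p 0 < (μ * y 0 - lam * x 0 - spatialDist y x) / (μ - lam)) :
    InPastCone μ y p := by
  obtain ⟨hxp, hratio⟩ := hx
  have hxd : spatialDist x p < lam * (x 0 - p 0) := (div_lt_iff₀ hxp).1 hratio
  rw [lt_div_iff₀ (sub_pos.2 hμ)] at hp
  have hyd : spatialDist y p < μ * (y 0 - p 0) :=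
    (spatialDist_triangle y x p).trans_lt (by linarith)
  have hlam : 0 < lam := pos_of_mul_pos_left ((spatialDist_nonneg x p).trans_lt hxd) hxp.le
  have hyp : 0 < y 0 - p 0 :=
    pos_of_mul_pos_right ((spatialDist_nonneg y p).trans_lt hyd) (hlam.trans hμ).le
  exact ⟨hyp, (div_lt_iff₀ hyp).2 hyd⟩

theorem mink_neg (h : InPastCone μ y p) (hμ : μ ≤ 1) :
    mink (fun i => y i - p i) (fun i => y i - p i) < 0 := by
  obtain ⟨hyp, hratio⟩ := h
  have hlt : spatialDist y p < y 0 - p 0 :=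
    ((div_lt_iff₀ hyp).1 hratio).trans_le (mul_le_of_le_one_left hyp.le hμ)
  have hsq := (Real.sqrt_lt' hyp).1 hlt
  simp only [mink]
  nlinarith

end InPastCone

theorem bounded_away_reference_independent_general (τmin τmax : ℝ) (ξ : ℝ → Fin 4 → ℝ)
    (hbot : Filter.Tendsto (fun τ => ξ τ 0) (nhdsWithin τmin (Set.Ioi τmin)) Filter.atBot)
    (x : Fin 4 → ℝ) (lam : ℝ)
    (τ₀ : ℝ) (hτ₀ : τmin < τ₀) (hτ₀' : τ₀ ≤ τmax)
    (hx : ∀ τ, τmin < τ → τ < τ₀ →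
        0 < x 0 - ξ τ 0 ∧
        Real.sqrt ((x 1 - ξ τ 1) ^ 2 + (x 2 - ξ τ 2) ^ 2 + (x 3 - ξ τ 3) ^ 2)
            / (x 0 - ξ τ 0) < lam)
    (y : Fin 4 → ℝ) (μ : ℝ) (hμ1 : lam < μ) (hμ2 : μ < 1) :
    (∃ τh₀, τmin < τh₀ ∧ ∀ τ, τmin < τ → τ < τh₀ →
        0 < y 0 - ξ τ 0 ∧
        Real.sqrt ((y 1 - ξ τ 1) ^ 2 + (y 2 - ξ τ 2) ^ 2 + (y 3 - ξ τ 3) ^ 2)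
            / (y 0 - ξ τ 0) < μ) ∧
      (∃ τ, τmin < τ ∧ τ < τmax ∧
        mink (fun i => y i - ξ τ i) (fun i => y i - ξ τ i) < 0 ∧ ξ τ 0 < y 0) := by
  have hfar := hbot.eventually
    (eventually_lt_atBot ((μ * y 0 - lam * x 0 - spatialDist y x) / (μ - lam)))
  have hcone : ∀ᶠ τ in 𝓝[>] τmin, InPastCone μ y (ξ τ) := by
    filter_upwards [Ioo_mem_nhdsGT hτ₀, hfar] with τ hτ hξ
    exact InPastCone.of_time_lt (hx τ hτ.1 hτ.2) hμ1 hξ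
  obtain ⟨τh₀, hτh₀, hsub⟩ := mem_nhdsGT_iff_exists_Ioo_subset.1 hcone
  refine ⟨⟨τh₀, hτh₀, fun τ h₁ h₂ => hsub ⟨h₁, h₂⟩⟩, ?_⟩
  obtain ⟨τ, hτ, hτmin, hτ₀τ⟩ := (hcone.and (Ioo_mem_nhdsGT hτ₀)).exists
  exact ⟨τ, hτmin, hτ₀τ.trans_le hτ₀', hτ.mink_neg hμ2.le, sub_pos.1 hτ.1⟩

/-- Independence of the reference event: if the worldline is bounded away from the
past light-cone of one event x (with ratio bound λ < 1), then for every event y and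
every μ with λ < μ < 1 the analogous bound holds near τ_min; in particular y lies in
the chronological future of the worldline. -/
theorem bounded_away_reference_independent (τmin τmax : ℝ) (ξ ξd : ℝ → Fin 4 → ℝ)
    (hderiv : ∀ τ ∈ Set.Ioo τmin τmax, ∀ i, HasDerivAt (fun t => ξ t i) (ξd τ i) τ)
    (hunit : ∀ τ ∈ Set.Ioo τmin τmax, mink (ξd τ) (ξd τ) = -1)
    (hfutvel : ∀ τ ∈ Set.Ioo τmin τmax, 0 < ξd τ 0)
    (hbot : Filter.Tendsto (fun τ => ξ τ 0) (nhdsWithin τmin (Set.Ioi τmin)) Filter.atBot)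
    (x : Fin 4 → ℝ) (lam : ℝ) (hlam0 : 0 < lam) (hlam1 : lam < 1)
    (τ₀ : ℝ) (hτ₀ : τmin < τ₀) (hτ₀' : τ₀ ≤ τmax)
    (hx : ∀ τ, τmin < τ → τ < τ₀ →
        0 < x 0 - ξ τ 0 ∧
        Real.sqrt ((x 1 - ξ τ 1) ^ 2 + (x 2 - ξ τ 2) ^ 2 + (x 3 - ξ τ 3) ^ 2)
            / (x 0 - ξ τ 0) < lam)
    (y : Fin 4 → ℝ) (μ : ℝ) (hμ1 : lam < μ) (hμ2 : μ < 1) :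
    (∃ τh₀, τmin < τh₀ ∧ ∀ τ, τmin < τ → τ < τh₀ →
        0 < y 0 - ξ τ 0 ∧
        Real.sqrt ((y 1 - ξ τ 1) ^ 2 + (y 2 - ξ τ 2) ^ 2 + (y 3 - ξ τ 3) ^ 2)
            / (y 0 - ξ τ 0) < μ) ∧
      (∃ τ, τmin < τ ∧ τ < τmax ∧
        mink (fun i => y i - ξ τ i) (fun i => y i - ξ τ i) < 0 ∧ ξ τ 0 < y 0) :=
  bounded_away_reference_independent_general τmin τmax ξ hbot x lam τ₀ hτ₀ hτ₀' hx y μ hμ1 hμ2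
end
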